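/- Let (C, ⊥) be an orthogonal category, W a set of morphisms of C, and L : C → C[W⁻¹] the localization with the induced orthogonality relation ⊥_W. The pullback functor L* = (−)∘L from functors C[W⁻¹] → Alg_As(M) to functors C → Alg_As(M) restricts to an equivalence between the category of ⊥_W-commutative functors on C[W⁻¹] and the category of ⊥-commutative functors on C that send every morphism in W to an isomorphism. -/

import Mathlib

open CategoryTheory MonoidalCategory

/-- An orthogonality relation on a category `C`. -/
structure OrthRel (C : Type*) [Category C] where
  rel : ∀ ⦃a b t : C⦄, (a ⟶ t) → (b ⟶ t) → Prop
  symm : ∀ ⦃a b t : C⦄ (f₁ : a ⟶ t) (f₂ : b ⟶ t), rel f₁ f₂ → rel f₂ f₁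
  stable : ∀ ⦃a b t a' b' t' : C⦄ (f₁ : a ⟶ t) (f₂ : b ⟶ t)
      (h₁ : a' ⟶ a) (h₂ : b' ⟶ b) (g : t ⟶ t'),
      rel f₁ f₂ → rel (h₁ ≫ f₁ ≫ g) (h₂ ≫ f₂ ≫ g)

/-- A functor `A : C ⥤ Alg_As(M)` (monoid objects in `M`) is `⊥`-commutative if for all
orthogonal pairs `(f₁ : c₁ → c) ⊥ (f₂ : c₂ → c)` one has
`μ_c ∘ (A f₁ ⊗ A f₂) = μ_c^op ∘ (A f₁ ⊗ A f₂)`, where `μ^op = μ ∘ β`. -/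
def PerpCommutative {C : Type*} [Category C] (P : OrthRel C)
    {M : Type*} [Category M] [MonoidalCategory M] [BraidedCategory M]
    (A : C ⥤ Mon M) : Prop :=
  ∀ ⦃c₁ c₂ c : C⦄ (f₁ : c₁ ⟶ c) (f₂ : c₂ ⟶ c), P.rel f₁ f₂ →
    ((A.map f₁).hom ⊗ₘ (A.map f₂).hom) ≫ MonObj.mul (X := (A.obj c).X) =
      (β_ (A.obj c₁).X (A.obj c₂).X).hom ≫ ((A.map f₂).hom ⊗ₘ (A.map f₁).hom) ≫ MonObj.mul (X := (A.obj c).X)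

/-!
Pulling back along a localization functor `L : C ⥤ C[W⁻¹]` is fully faithful on functor
categories, with essential image the functors inverting `W`. It remains to match the
commutativity conditions: `L ⋙ B` is `⊥`-commutative iff `B` is `⊥_W`-commutative. The
nontrivial direction holds because the pairs of morphisms whose images under `B` commute form
an orthogonality relation on `C[W⁻¹]` making `L` orthogonal, so it contains `⊥_W` by
minimality. The essential image is described up to isomorphism, so `⊥`-commutativity has to be
invariant under natural isomorphism.
-/

def commOrthRel {D : Type*} [Category D] {M : Type*} [Category M] [MonoidalCategory M]
    [SymmetricCategory M] (B : D ⥤ Mon M) : OrthRel D where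
  rel {x y z} g₁ g₂ :=
    ((B.map g₁).hom ⊗ₘ (B.map g₂).hom) ≫ MonObj.mul (X := (B.obj z).X) =
      (β_ (B.obj x).X (B.obj y).X).hom ≫ ((B.map g₂).hom ⊗ₘ (B.map g₁).hom) ≫
        MonObj.mul (X := (B.obj z).X)
  symm {_ _ _} _ _ h := by
    rw [h, ← Category.assoc, SymmetricCategory.symmetry, Category.id_comp]
  stable {_ _ _ _ _ _} _ _ _ _ _ h := by
    simp only [Functor.map_comp, Mon.comp_hom', ← tensorHom_comp_tensorHom, Category.assoc,
      ← IsMonHom.mul_hom]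
    rw [reassoc_of% h, BraidedCategory.braiding_naturality_assoc]

theorem PerpCommutative.of_iso {D : Type*} [Category D] {M : Type*} [Category M]
    [MonoidalCategory M] [BraidedCategory M] {P : OrthRel D} {A A' : D ⥤ Mon M} (e : A ≅ A')
    (h : PerpCommutative P A) : PerpCommutative P A' := by
  intro c₁ c₂ c f₁ f₂ hf
  have conj : ∀ {x : D} (f : x ⟶ c),
      (A'.map f).hom = (e.inv.app x).hom ≫ (A.map f).hom ≫ (e.hom.app c).hom := by
    intro x f
    rw [← NatIso.naturality_1 e f, Mon.comp_hom', Mon.comp_hom']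
  simp only [conj, ← tensorHom_comp_tensorHom, Category.assoc, ← IsMonHom.mul_hom]
  rw [reassoc_of% (h f₁ f₂ hf), BraidedCategory.braiding_naturality_assoc]

def CategoryTheory.Functor.IsOrthogonal {C D : Type*} [Category C] [Category D] (L : C ⥤ D)
    (P : OrthRel C) (R : OrthRel D) : Prop :=
  ∀ ⦃a b t : C⦄ (f₁ : a ⟶ t) (f₂ : b ⟶ t), P.rel f₁ f₂ → R.rel (L.map f₁) (L.map f₂)

def OrthRel.IsInducedAlong {C D : Type*} [Category C] [Category D] (R : OrthRel D)
    (L : C ⥤ D) (P : OrthRel C) : Prop :=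
  L.IsOrthogonal P R ∧ ∀ R' : OrthRel D, L.IsOrthogonal P R' →
    ∀ ⦃x y z : D⦄ (g₁ : x ⟶ z) (g₂ : y ⟶ z), R.rel g₁ g₂ → R'.rel g₁ g₂

section Pullback

variable {C D : Type*} [Category C] [Category D] {P : OrthRel C} {R : OrthRel D}
  {M : Type*} [Category M] [MonoidalCategory M] [SymmetricCategory M]

theorem perpCommutative_comp_iff {L : C ⥤ D} (hR : R.IsInducedAlong L P) (B : D ⥤ Mon M) :
    PerpCommutative P (L ⋙ B) ↔ PerpCommutative R B :=
  ⟨fun h => hR.2 (commOrthRel B) h, fun h _ _ _ f₁ f₂ hf => h _ _ (hR.1 f₁ f₂ hf)⟩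

variable (L : C ⥤ D) (W : MorphismProperty C) [L.IsLocalization W]

def perpCommutativePullback (hR : L.IsOrthogonal P R) :
    ObjectProperty.FullSubcategory (fun B : D ⥤ Mon M => PerpCommutative R B) ⥤
      ObjectProperty.FullSubcategory (fun A : C ⥤ Mon M => PerpCommutative P A ∧
        ∀ ⦃x y : C⦄ (f : x ⟶ y), W f → IsIso (A.map f)) :=
  ObjectProperty.lift _ (ObjectProperty.ι _ ⋙ (Functor.whiskeringLeft C D (Mon M)).obj L)
    fun B => ⟨fun _ _ _ f₁ f₂ hf => B.property _ _ (hR f₁ f₂ hf),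
      fun _ _ f hf => have := Localization.inverts L W f hf
        inferInstanceAs (IsIso (B.obj.map (L.map f)))⟩

instance (hR : L.IsOrthogonal P R) : (perpCommutativePullback (M := M) L W hR).Full := by
  have := Localization.full_whiskeringLeft L W (Mon M)
  dsimp only [perpCommutativePullback]
  infer_instance

instance (hR : L.IsOrthogonal P R) : (perpCommutativePullback (M := M) L W hR).Faithful := by
  have := Localization.faithful_whiskeringLeft L W (Mon M)
  dsimp only [perpCommutativePullback]
  infer_instance

theorem perpCommutativePullback_isEquivalence (hR : R.IsInducedAlong L P) :
    (perpCommutativePullback (M := M) L W hR.1).IsEquivalence where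
  essSurj.mem_essImage A := by
    let fac := Localization.fac A.obj A.property.2 L
    have hB := (perpCommutative_comp_iff hR _).1 (A.property.1.of_iso fac.symm)
    exact ⟨⟨_, hB⟩, ⟨ObjectProperty.isoMk _ fac⟩⟩

end Pullback

theorem stmt3_general {C : Type*} [Category C] (P : OrthRel C) (W : MorphismProperty C)
    {M : Type*} [Category M] [MonoidalCategory M] [SymmetricCategory M]
    (R : OrthRel W.Localization)
    (hR : ∀ ⦃a b t : C⦄ (f₁ : a ⟶ t) (f₂ : b ⟶ t),
      P.rel f₁ f₂ → R.rel (W.Q.map f₁) (W.Q.map f₂))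
    (hRmin : ∀ R' : OrthRel W.Localization,
      (∀ ⦃a b t : C⦄ (f₁ : a ⟶ t) (f₂ : b ⟶ t),
        P.rel f₁ f₂ → R'.rel (W.Q.map f₁) (W.Q.map f₂)) →
      ∀ ⦃x y z : W.Localization⦄ (g₁ : x ⟶ z) (g₂ : y ⟶ z),
        R.rel g₁ g₂ → R'.rel g₁ g₂) :
    ∃ e : ObjectProperty.FullSubcategory (fun B : W.Localization ⥤ Mon M => PerpCommutative R B) ≌
        ObjectProperty.FullSubcategory (fun A : C ⥤ Mon M => PerpCommutative P A ∧
          ∀ ⦃x y : C⦄ (f : x ⟶ y), W f → IsIso (A.map f)),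
      -- the equivalence is (isomorphic to) the restriction of the pullback `L*`
      Nonempty ((e.functor ⋙ ObjectProperty.ι _) ≅
        (ObjectProperty.ι _ ⋙ (Functor.whiskeringLeft C W.Localization (Mon M)).obj W.Q)) := by
  have := perpCommutativePullback_isEquivalence (M := M) W.Q W ⟨hR, hRmin⟩
  exact ⟨(perpCommutativePullback W.Q W hR).asEquivalence, ⟨Iso.refl _⟩⟩

/-- Let `(C,⊥)` be an orthogonal category, `W` a set of morphisms, `L = W.Q` the
localization functor and `⊥_W` the induced orthogonality relation on `C[W⁻¹]` (the
smallest one making `L` orthogonal). For a bicomplete closed symmetric monoidal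
category `M`, the pullback functor `L* = (−)∘L` restricts to an equivalence between
the category of `⊥_W`-commutative functors `C[W⁻¹] ⥤ Alg_As(M)` and the category of
`⊥`-commutative functors `C ⥤ Alg_As(M)` sending every morphism of `W` to an
isomorphism. -/
theorem stmt3 {C : Type*} [Category C] (P : OrthRel C) (W : MorphismProperty C)
    {M : Type*} [Category M] [MonoidalCategory M] [SymmetricCategory M]
    [MonoidalClosed M] [Limits.HasLimits M] [Limits.HasColimits M]
    (R : OrthRel W.Localization)
    (hR : ∀ ⦃a b t : C⦄ (f₁ : a ⟶ t) (f₂ : b ⟶ t),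
      P.rel f₁ f₂ → R.rel (W.Q.map f₁) (W.Q.map f₂))
    (hRmin : ∀ R' : OrthRel W.Localization,
      (∀ ⦃a b t : C⦄ (f₁ : a ⟶ t) (f₂ : b ⟶ t),
        P.rel f₁ f₂ → R'.rel (W.Q.map f₁) (W.Q.map f₂)) →
      ∀ ⦃x y z : W.Localization⦄ (g₁ : x ⟶ z) (g₂ : y ⟶ z),
        R.rel g₁ g₂ → R'.rel g₁ g₂) :
    ∃ e : ObjectProperty.FullSubcategory (fun B : W.Localization ⥤ Mon M => PerpCommutative R B) ≌
        ObjectProperty.FullSubcategory (fun A : C ⥤ Mon M => PerpCommutative P A ∧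
          ∀ ⦃x y : C⦄ (f : x ⟶ y), W f → IsIso (A.map f)),
      -- the equivalence is (isomorphic to) the restriction of the pullback `L*`
      Nonempty ((e.functor ⋙ ObjectProperty.ι _) ≅
        (ObjectProperty.ι _ ⋙ (Functor.whiskeringLeft C W.Localization (Mon M)).obj W.Q)) :=
  stmt3_general P W R hR hRmin
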